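/- For every quadratic irrational u of discriminant Δ there exists a matrix σ ∈ Θ̃ such that σ·u (Möbius action) is an E-reduced quadratic irrational of discriminant Δ; that is, the Θ̃-orbit of u meets ℛ_E(Δ). -/

import Mathlib

noncomputable section

/-- `ω'` is the conjugate of the quadratic irrational `ω`: both are roots of the
minimal integer polynomial `A X^2 + B X + C` of `ω` (with `A > 0`, `gcd(A,B,C) = 1`),
and `ω' ≠ ω`. -/
def IsConjPair (ω ω' : ℝ) : Prop :=
  Irrational ω ∧ ∃ A B C : ℤ, 0 < A ∧ Int.gcd (Int.gcd A B : ℤ) C = 1 ∧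
    (A : ℝ) * ω ^ 2 + B * ω + C = 0 ∧ (A : ℝ) * ω' ^ 2 + B * ω' + C = 0 ∧ ω' ≠ ω

/-- The quadratic irrational `ω` has discriminant `Δ = B^2 - 4AC`, where
`A X^2 + B X + C` is its minimal integer polynomial (`A > 0`, `gcd(A,B,C) = 1`). -/
def HasDisc (ω : ℝ) (Δ : ℤ) : Prop :=
  Irrational ω ∧ ∃ A B C : ℤ, 0 < A ∧ Int.gcd (Int.gcd A B : ℤ) C = 1 ∧
    (A : ℝ) * ω ^ 2 + B * ω + C = 0 ∧ Δ = B ^ 2 - 4 * A * C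

/-- Möbius action of an integer matrix `(a, b; c, d)` on a real number:
`x ↦ (a x + b) / (c x + d)`. -/
def moebius (m : Matrix (Fin 2) (Fin 2) ℤ) (x : ℝ) : ℝ :=
  ((m 0 0 : ℝ) * x + m 0 1) / ((m 1 0 : ℝ) * x + m 1 1)

/-- Membership in the Theta group `Θ̃`: an integer matrix with determinant `±1`
which is congruent to `I₂` or to `J₂ = (0,1;1,0)` mod 2. -/
def IsTheta (m : Matrix (Fin 2) (Fin 2) ℤ) : Prop :=
  (m.det = 1 ∨ m.det = -1) ∧
  (m.map (Int.cast : ℤ → ZMod 2) = 1 ∨ m.map (Int.cast : ℤ → ZMod 2) = !![0, 1; 1, 0])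


/-!
Descent on the leading coefficient. Let `v, v'` be the roots of the primitive form
`f = A X² + B X + C`, and pick an even integer `a` with `|v - a| < 1`. The matrix `(0, 1; 1, -a)`
lies in `Θ̃` because `a` is even; it sends `v` to `1 / (v - a)` and `f` to a primitive form of the
same discriminant whose leading coefficient is `f(a) = A (v - a) (v' - a)`. If `|v' - a| < 1` this
coefficient is smaller than `A` in absolute value and we recurse. Otherwise
`|1 / (v' - a)| < 1 < |1 / (v - a)|`, and the sign change `x ↦ -x`, also in `Θ̃`, finishes.
-/

open Matrix

lemma moebius_mul (M N : Matrix (Fin 2) (Fin 2) ℤ) {x : ℝ}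
    (hN : (N 1 0 : ℝ) * x + N 1 1 ≠ 0) :
    moebius (M * N) x = moebius M (moebius N x) := by
  have hcomp : ∀ i, (M i 0 : ℝ) * moebius N x + M i 1 =
      (((M * N) i 0 : ℤ) * x + ((M * N) i 1 : ℤ)) / ((N 1 0 : ℝ) * x + N 1 1) := by
    intro i
    rw [moebius, mul_div_assoc', div_add' _ _ _ hN]
    simp only [mul_apply, Fin.sum_univ_two, Int.cast_add, Int.cast_mul]
    ring
  rw [moebius, moebius, hcomp, hcomp, div_div_div_cancel_right₀ hN]

lemma isTheta_mul {M N : Matrix (Fin 2) (Fin 2) ℤ} (hM : IsTheta M) (hN : IsTheta N) :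
    IsTheta (M * N) := by
  obtain ⟨hMdet, hMmod⟩ := hM
  obtain ⟨hNdet, hNmod⟩ := hN
  refine ⟨?_, ?_⟩
  · rw [det_mul]
    rcases hMdet with h | h <;> rcases hNdet with h' | h' <;> simp [h, h']
  · have hmap := Matrix.map_mul (L := M) (M := N) (f := Int.castRingHom (ZMod 2))
    simp only [Int.coe_castRingHom] at hmap
    rw [hmap]
    rcases hMmod with h | h <;> rcases hNmod with h' | h' <;> rw [h, h']
    · simp
    · simp
    · simp
    · left; decide

lemma isTheta_one : IsTheta 1 :=
  ⟨Or.inl det_one, Or.inl (Matrix.map_one _ Int.cast_zero Int.cast_one)⟩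

lemma isTheta_diag_neg : IsTheta !![-1, 0; 0, 1] := by
  refine ⟨Or.inr (by simp [det_fin_two_of]), Or.inl ?_⟩
  ext i j
  fin_cases i <;> fin_cases j <;> simp

lemma isTheta_inv_sub {a : ℤ} (ha : Even a) : IsTheta !![0, 1; 1, -a] := by
  refine ⟨Or.inr (by simp [det_fin_two_of]), Or.inr ?_⟩
  ext i j
  fin_cases i <;> fin_cases j <;> simp [ha.intCast_zmod_two]

lemma moebius_diag_neg (x : ℝ) : moebius !![-1, 0; 0, 1] x = -x := by
  simp [moebius]

lemma moebius_inv_sub (a : ℤ) (x : ℝ) : moebius !![0, 1; 1, -a] x = (x - a)⁻¹ := by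
  simp [moebius, sub_eq_add_neg]

lemma exists_isTheta_of_moebius {P : ℝ → Prop} {τ : Matrix (Fin 2) (Fin 2) ℤ} {x : ℝ}
    (hτ : IsTheta τ) (hx : (τ 1 0 : ℝ) * x + τ 1 1 ≠ 0)
    (h : ∃ σ, IsTheta σ ∧ P (moebius σ (moebius τ x))) :
    ∃ σ, IsTheta σ ∧ P (moebius σ x) := by
  obtain ⟨σ, hσ, hP⟩ := h
  exact ⟨σ * τ, isTheta_mul hσ hτ, by rwa [moebius_mul σ τ hx]⟩

lemma Irrational.abs_sub_intCast_ne_one {x : ℝ} (hx : Irrational x) (a : ℤ) : |x - a| ≠ 1 := by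
  intro h
  rcases (abs_eq zero_le_one).mp h with h' | h'
  · exact hx.ne_int (a + 1) (by push_cast; linarith)
  · exact hx.ne_int (a - 1) (by push_cast; linarith)

lemma Irrational.exists_even_abs_sub_lt_one {x : ℝ} (hx : Irrational x) :
    ∃ a : ℤ, Even a ∧ |x - a| < 1 := by
  refine ⟨2 * round (x / 2), even_two_mul _, lt_of_le_of_ne ?_ (hx.abs_sub_intCast_ne_one _)⟩
  have hround := abs_sub_round (x / 2)
  calc |x - ((2 * round (x / 2) : ℤ) : ℝ)| = 2 * |x / 2 - round (x / 2)| := by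
        rw [show x - ((2 * round (x / 2) : ℤ) : ℝ) = 2 * (x / 2 - round (x / 2)) by push_cast; ring,
          abs_mul, abs_two]
    _ ≤ 1 := by linarith

lemma Int.gcd_gcd_eq_one_of_dvd {A B C A' B' C' : ℤ} (h : Int.gcd (Int.gcd A B : ℤ) C = 1)
    (hdvd : ∀ d : ℤ, d ∣ A' → d ∣ B' → d ∣ C' → d ∣ A ∧ d ∣ B ∧ d ∣ C) :
    Int.gcd (Int.gcd A' B' : ℤ) C' = 1 := by
  set g := Int.gcd (Int.gcd A' B' : ℤ) C'
  obtain ⟨hA, hB, hC⟩ := hdvd g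
    ((Int.gcd_dvd_left _ _).trans (Int.gcd_dvd_left _ _))
    ((Int.gcd_dvd_left _ _).trans (Int.gcd_dvd_right _ _)) (Int.gcd_dvd_right _ _)
  have hg := Int.dvd_gcd (Int.natCast_dvd_natCast.mpr (Int.dvd_gcd hA hB)) hC
  rw [h] at hg
  exact Nat.dvd_one.mp hg

/-- Membership of `ω` in `ℛ_E(Δ)`. -/
def IsEReduced (ω : ℝ) (Δ : ℤ) : Prop :=
  1 < ω ∧ HasDisc ω Δ ∧ ∃ ω' : ℝ, IsConjPair ω ω' ∧ -1 < ω' ∧ ω' < 1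

/-- Like `IsConjPair`, but without normalizing the sign of the leading coefficient `A`. -/
def IsRootPair (A B C : ℤ) (v v' : ℝ) : Prop :=
  Irrational v ∧ A ≠ 0 ∧ Int.gcd (Int.gcd A B : ℤ) C = 1 ∧
    (A : ℝ) * v ^ 2 + B * v + C = 0 ∧ (A : ℝ) * v' ^ 2 + B * v' + C = 0 ∧ v' ≠ v

lemma isRootPair_of_root {A B C : ℤ} {v : ℝ} (hv : Irrational v) (hA : A ≠ 0)
    (hg : Int.gcd (Int.gcd A B : ℤ) C = 1) (hroot : (A : ℝ) * v ^ 2 + B * v + C = 0) :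
    IsRootPair A B C v (-B / A - v) := by
  have hA' : (A : ℝ) ≠ 0 := Int.cast_ne_zero.mpr hA
  refine ⟨hv, hA, hg, hroot, ?_, fun h => hv ⟨-B / (2 * A), ?_⟩⟩
  · field_simp
    linear_combination A * hroot
  · push_cast
    field_simp at h ⊢
    linarith

namespace IsRootPair

variable {A B C : ℤ} {v v' : ℝ}

lemma vieta (h : IsRootPair A B C v v') : (A : ℝ) * v + A * v' + B = 0 := by
  obtain ⟨-, -, -, h1, h2, hne⟩ := h
  have hprod : ((A : ℝ) * v + A * v' + B) * (v - v') = 0 := by linear_combination h1 - h2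
  exact (mul_eq_zero.mp hprod).resolve_right (sub_ne_zero_of_ne hne.symm)

lemma irrational_conj (h : IsRootPair A B C v v') : Irrational v' := by
  have hA : (A : ℝ) ≠ 0 := Int.cast_ne_zero.mpr h.2.1
  have hv' : v' = ((-B / A : ℚ) : ℝ) - v := by
    push_cast
    field_simp
    linear_combination h.vieta
  exact hv' ▸ h.1.ratCast_sub _

lemma neg_coeffs (h : IsRootPair A B C v v') : IsRootPair (-A) (-B) (-C) v v' := by
  obtain ⟨hv, hA, hg, h1, h2, hne⟩ := h
  refine ⟨hv, neg_ne_zero.mpr hA, Int.gcd_gcd_eq_one_of_dvd hg fun d hA hB hC => ?_, ?_, ?_, hne⟩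
  · exact ⟨dvd_neg.mp hA, dvd_neg.mp hB, dvd_neg.mp hC⟩
  · push_cast; linear_combination -h1
  · push_cast; linear_combination -h2

lemma neg (h : IsRootPair A B C v v') : IsRootPair A (-B) C (-v) (-v') := by
  obtain ⟨hv, hA, hg, h1, h2, hne⟩ := h
  refine ⟨hv.neg, hA, Int.gcd_gcd_eq_one_of_dvd hg fun d hA hB hC => ?_, ?_, ?_,
    fun h => hne (neg_injective h)⟩
  · exact ⟨hA, dvd_neg.mp hB, hC⟩
  · push_cast; linear_combination h1
  · push_cast; linear_combination h2

lemma inv_sub_leading_coeff (h : IsRootPair A B C v v') (a : ℤ) :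
    ((A * a ^ 2 + B * a + C : ℤ) : ℝ) = A * (v - a) * (v' - a) := by
  push_cast
  linear_combination (↑a - v) * h.vieta + h.2.2.2.1

/-- The substitution `X ↦ a + 1 / X` sends the form `(A, B, C)` to `(f(a), f'(a), A)`
where `f = A X² + B X + C`. -/
lemma inv_sub (h : IsRootPair A B C v v') (a : ℤ) :
    IsRootPair (A * a ^ 2 + B * a + C) (2 * A * a + B) A (v - a)⁻¹ (v' - a)⁻¹ := by
  have hva : v - a ≠ 0 := sub_ne_zero_of_ne (h.1.ne_int a)
  have hv'a : v' - a ≠ 0 := sub_ne_zero_of_ne (h.irrational_conj.ne_int a)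
  have hA₁ : A * a ^ 2 + B * a + C ≠ 0 := by
    rw [← Int.cast_ne_zero (α := ℝ), h.inv_sub_leading_coeff]
    exact mul_ne_zero (mul_ne_zero (Int.cast_ne_zero.mpr h.2.1) hva) hv'a
  obtain ⟨hv, hA, hg, h1, h2, hne⟩ := h
  refine ⟨(hv.sub_intCast a).inv, hA₁, Int.gcd_gcd_eq_one_of_dvd hg fun d hdA₁ hdB₁ hdA => ?_,
    ?_, ?_, fun h => hne (by simpa using h)⟩
  · have hB : d ∣ B := by
      have := dvd_sub hdB₁ (hdA.mul_left (2 * a))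
      rwa [show 2 * A * a + B - 2 * a * A = B by ring] at this
    refine ⟨hdA, hB, ?_⟩
    have := dvd_sub (dvd_sub hdA₁ (hdA.mul_right (a ^ 2))) (hB.mul_right a)
    rwa [show A * a ^ 2 + B * a + C - A * a ^ 2 - B * a = C by ring] at this
  · push_cast
    field_simp
    linear_combination h1
  · push_cast
    field_simp
    linear_combination h2

lemma isEReduced (h : IsRootPair A B C v v') (hv : 1 < v) (hv' : |v'| < 1) :
    IsEReduced v (B ^ 2 - 4 * A * C) := by
  wlog hA : 0 < A generalizing A B C
  · have := this h.neg_coeffs (by linarith [h.2.1.lt_or_gt.resolve_right hA])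
    rwa [show (-B) ^ 2 - 4 * -A * -C = B ^ 2 - 4 * A * C by ring] at this
  obtain ⟨hirr, -, hg, h1, h2, hne⟩ := h
  exact ⟨hv, ⟨hirr, A, B, C, hA, hg, h1, rfl⟩, v', ⟨hirr, A, B, C, hA, hg, h1, h2, hne⟩,
    abs_lt.mp hv'⟩

lemma exists_isTheta_isEReduced_of_abs (h : IsRootPair A B C v v') (hv : 1 < |v|)
    (hv' : |v'| < 1) : ∃ σ, IsTheta σ ∧ IsEReduced (moebius σ v) (B ^ 2 - 4 * A * C) := by
  rcases lt_abs.mp hv with hv | hv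
  · exact ⟨1, isTheta_one, by simpa [moebius] using h.isEReduced hv hv'⟩
  · refine ⟨!![-1, 0; 0, 1], isTheta_diag_neg, ?_⟩
    rw [moebius_diag_neg, ← neg_sq]
    exact h.neg.isEReduced hv (by rwa [abs_neg])

lemma natAbs_inv_sub_lt (h : IsRootPair A B C v v') {a : ℤ} (hva : |v - a| < 1)
    (hv'a : |v' - a| < 1) : (A * a ^ 2 + B * a + C).natAbs < A.natAbs := by
  have hA : 0 < |(A : ℝ)| := abs_pos.mpr (Int.cast_ne_zero.mpr h.2.1)
  suffices |((A * a ^ 2 + B * a + C : ℤ) : ℝ)| < |(A : ℝ)| by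
    exact_mod_cast (by simpa only [Nat.cast_natAbs, Int.cast_abs] using this :
      ((A * a ^ 2 + B * a + C).natAbs : ℝ) < A.natAbs)
  rw [h.inv_sub_leading_coeff, abs_mul, abs_mul]
  calc |(A : ℝ)| * |v - a| * |v' - a| < |(A : ℝ)| * 1 * 1 := by gcongr
    _ = |(A : ℝ)| := by ring

theorem exists_isTheta_isEReduced (h : IsRootPair A B C v v') :
    ∃ σ, IsTheta σ ∧ IsEReduced (moebius σ v) (B ^ 2 - 4 * A * C) := by
  induction hn : A.natAbs using Nat.strong_induction_on generalizing A B C v v' with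
  | _ n ih =>
  obtain ⟨a, ha, hva⟩ := h.1.exists_even_abs_sub_lt_one
  refine exists_isTheta_of_moebius (P := (IsEReduced · _)) (isTheta_inv_sub ha)
    (by simpa [sub_eq_add_neg] using sub_ne_zero_of_ne (h.1.ne_int a)) ?_
  rw [moebius_inv_sub, show B ^ 2 - 4 * A * C =
    (2 * A * a + B) ^ 2 - 4 * (A * a ^ 2 + B * a + C) * A by ring]
  rcases lt_or_gt_of_ne (h.irrational_conj.abs_sub_intCast_ne_one a) with hv'a | hv'a
  · exact ih _ (hn ▸ h.natAbs_inv_sub_lt hva hv'a) (h.inv_sub a) rfl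
  · refine (h.inv_sub a).exists_isTheta_isEReduced_of_abs ?_ ?_ <;> rw [abs_inv]
    · exact (one_lt_inv₀ (abs_pos.mpr (sub_ne_zero_of_ne (h.1.ne_int a)))).mpr hva
    · exact inv_lt_one_of_one_lt₀ hv'a

end IsRootPair

theorem stmt11 (Δ : ℤ) (u : ℝ) (hdisc : HasDisc u Δ) :
    ∃ σ : Matrix (Fin 2) (Fin 2) ℤ, IsTheta σ ∧
      1 < moebius σ u ∧ HasDisc (moebius σ u) Δ ∧
      ∃ ω' : ℝ, IsConjPair (moebius σ u) ω' ∧ -1 < ω' ∧ ω' < 1 := by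
  obtain ⟨hu, A, B, C, hA, hg, hroot, rfl⟩ := hdisc
  exact (isRootPair_of_root hu hA.ne' hg hroot).exists_isTheta_isEReduced
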